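/- Let n ≥ 2 and s ≥ 1 be integers and let a = (a_1,…,a_n) be a vector of positive integers with gcd(a_1,…,a_n) = 1. Then the integral s-covering radius satisfies μ_s(S_a, Λ_a; ℤ^{n-1}) = F_s(a) + a_n, where μ_s(S_a, Λ_a; ℤ^{n-1}) = min{ρ > 0 : for every z ∈ ℤ^{n-1}, the set (z + ρ·S_a) ∩ Λ_a contains at least s points}. -/

import Mathlib

/-!
Write `a = (w, N)` with `N = aₙ`. For `r > 0`, translation by `z` identifies the points of
`(z + r S_a) ∩ Λ_a` with the `u ∈ ℕ^{n-1}` such that `⟨w, u⟩ ≤ r` and `⟨w, u⟩ ≡ -⟨w, z⟩ (mod N)`,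
while dropping the last coordinate identifies the representations of `b` by `a` with the `u`
such that `⟨w, u⟩ ≤ b` and `⟨w, u⟩ ≡ b (mod N)`. If `r ≥ F + N`, every residue class mod `N`
contains some `b ∈ (F, F + N]`, which has at least `s` representations. If `r < F + N`, choosing
`z` with `⟨w, z⟩ ≡ -F (mod N)` (possible as `gcd a = 1`) puts the covered points among the fewer
than `s` representations of `F`.
-/

open Finset

theorem Set.exists_injective_fin_iff_le_encard {α : Type*} {S : Set α} {k : ℕ} :
    (∃ v : Fin k → α, Function.Injective v ∧ ∀ j, v j ∈ S) ↔ (k : ℕ∞) ≤ S.encard := by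
  constructor
  · rintro ⟨v, hv, hvS⟩
    calc (k : ℕ∞) = ENat.card (Fin k) := by simp
      _ ≤ (Set.range v).encard := hv.encard_range
      _ ≤ S.encard := Set.encard_le_encard (Set.range_subset_iff.2 hvS)
  · intro hk
    obtain ⟨y, -⟩ := Fin.Embedding.exists_embedding_disjoint_range_of_add_le_ENat_card
      (α := S) (s := ∅) (n := k) (by rw [Set.ncard_empty, Nat.cast_zero, zero_add]; exact hk)
    exact ⟨fun j => y j, Subtype.val_injective.comp y.injective, fun j => (y j).2⟩

theorem eq_of_isLeast_setOf_lt_and_le {α : Type*} [LinearOrder α] [DenselyOrdered α]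
    {a x ρ : α} (h : IsLeast {r | a < r ∧ x ≤ r} ρ) : ρ = x := by
  by_cases hx : a < x
  · exact h.unique ⟨⟨hx, le_rfl⟩, fun r hr => hr.2⟩
  · obtain ⟨r, har, hrρ⟩ := exists_between h.1.1
    exact absurd (h.2 ⟨har, (not_lt.1 hx).trans har.le⟩) hrρ.not_ge

theorem Int.ModEq.le_of_lt_add {n a b : ℤ} (h : a ≡ b [ZMOD n]) (hlt : a < b + n) : a ≤ b := by
  obtain ⟨k, hk⟩ := Int.modEq_iff_dvd.1 h
  by_contra! hba
  rcases le_or_gt 0 k with hk0 | hk0 <;> nlinarith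

theorem Finset.gcd_natCast {ι : Type*} (s : Finset ι) (a : ι → ℕ) :
    (s.gcd fun i => (a i : ℤ)) = (s.gcd a : ℕ) := by
  have habs_dvd : (s.gcd fun i => (a i : ℤ)).natAbs ∣ s.gcd a :=
    dvd_gcd fun i hi => Int.natAbs_dvd_natAbs.2 (gcd_dvd hi)
  have hdvd_abs : s.gcd a ∣ (s.gcd fun i => (a i : ℤ)).natAbs :=
    Int.natCast_dvd.1 (dvd_gcd fun i hi => Int.natCast_dvd_natCast.2 (gcd_dvd hi))
  rw [← Nat.dvd_antisymm habs_dvd hdvd_abs, Int.natAbs_of_nonneg Int.finsetGcd_nonneg]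

section

variable {ι : Type*} [Fintype ι]

def representations (a : ι → ℕ) (b : ℤ) : Set (ι → ℕ) :=
  {z | ∑ i, (a i : ℤ) * z i = b}

theorem finite_representations {a : ι → ℕ} (ha : ∀ i, 0 < a i) (b : ℤ) :
    (representations a b).Finite := by
  classical
  refine (Set.finite_Iic fun _ => b.toNat).subset fun z (hz : _ = b) i => ?_
  have : (z i : ℤ) ≤ b :=
    calc (z i : ℤ) ≤ a i * z i := le_mul_of_one_le_left (by positivity) (by exact_mod_cast ha i)
      _ ≤ ∑ j, (a j : ℤ) * z j :=
        single_le_sum (f := fun j => (a j : ℤ) * z j) (fun j _ => by positivity) (mem_univ i)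
      _ = b := hz
  change z i ≤ b.toNat
  omega

def residuePoints (w : ι → ℕ) (N : ℕ) (c t : ℤ) : Set (ι → ℕ) :=
  {u | ∑ i, (w i : ℤ) * u i ≡ c [ZMOD N] ∧ ∑ i, (w i : ℤ) * u i ≤ t}

variable {w : ι → ℕ} {N : ℕ} {c c' t t' : ℤ}

theorem residuePoints_subset (hc : c ≡ c' [ZMOD N]) (ht : t ≤ t') :
    residuePoints w N c t ⊆ residuePoints w N c' t' :=
  fun _ ⟨hu, hut⟩ => ⟨hu.trans hc, hut.trans ht⟩

theorem residuePoints_subset_self (hc : c ≡ c' [ZMOD N]) (ht : t < c' + N) :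
    residuePoints w N c t ⊆ residuePoints w N c' c' :=
  fun _ ⟨hu, hut⟩ => ⟨hu.trans hc, (hu.trans hc).le_of_lt_add (hut.trans_lt ht)⟩

end

section

variable {m : ℕ} {a : Fin (m + 1) → ℕ}

theorem exists_sum_init_mul_modEq (ha : univ.gcd a = 1) (c : ℤ) :
    ∃ z : Fin m → ℤ, ∑ i, (Fin.init a i : ℤ) * z i ≡ c [ZMOD a (Fin.last m)] := by
  obtain ⟨g, hg⟩ := univ.gcd_eq_sum_mul fun i => (a i : ℤ)
  rw [gcd_natCast, ha, Fin.sum_univ_castSucc] at hg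
  refine ⟨fun i => g (Fin.castSucc i) * c, Int.modEq_iff_dvd.2 ⟨c * g (Fin.last m), ?_⟩⟩
  simp only [Fin.init, ← mul_assoc, ← sum_mul]
  linear_combination c * hg

theorem mem_representations_iff {b : ℤ} {z : Fin (m + 1) → ℕ} :
    z ∈ representations a b ↔
      ∑ i, (Fin.init a i : ℤ) * Fin.init z i + a (Fin.last m) * z (Fin.last m) = b := by
  change _ = b ↔ _
  rw [Fin.sum_univ_castSucc]
  rfl

theorem injOn_init_representations (hN : 0 < a (Fin.last m)) (b : ℤ) :
    Set.InjOn Fin.init (representations a b) := by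
  intro z hz z' hz' hzz'
  rw [mem_representations_iff] at hz hz'
  rw [hzz'] at hz
  have hlast : (a (Fin.last m) : ℤ) * z (Fin.last m) = a (Fin.last m) * z' (Fin.last m) := by
    linarith
  replace hlast := mul_left_cancel₀ (by positivity) hlast
  norm_cast at hlast
  rw [← Fin.snoc_init_self z, ← Fin.snoc_init_self z', hzz', hlast]

theorem image_init_representations (hN : 0 < a (Fin.last m)) (b : ℤ) :
    Fin.init '' representations a b = residuePoints (Fin.init a) (a (Fin.last m)) b b := by
  ext u
  constructor
  · rintro ⟨z, hz, rfl⟩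
    rw [mem_representations_iff] at hz
    exact ⟨Int.modEq_iff_dvd.2 ⟨z (Fin.last m), by linarith⟩, by
      linarith [(by positivity : (0 : ℤ) ≤ a (Fin.last m) * z (Fin.last m))]⟩
  · rintro ⟨hmod, hle⟩
    obtain ⟨k, hk⟩ := Int.modEq_iff_dvd.1 hmod
    have hk0 : 0 ≤ k := by
      by_contra! hk0
      nlinarith [(by exact_mod_cast hN : (0 : ℤ) < a (Fin.last m))]
    refine ⟨Fin.snoc u k.toNat, ?_, Fin.init_snoc _ _⟩
    rw [mem_representations_iff, Fin.init_snoc, Fin.snoc_last, Int.toNat_of_nonneg hk0]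
    linarith

theorem encard_representations (hN : 0 < a (Fin.last m)) (b : ℤ) :
    (representations a b).encard = (residuePoints (Fin.init a) (a (Fin.last m)) b b).encard := by
  rw [← image_init_representations hN, (injOn_init_representations hN b).encard_image]

end

section

variable {ι : Type*} [Fintype ι]

theorem exists_nonneg_add_smul_eq_iff {w x z : ι → ℝ} {r : ℝ} (hr : 0 < r) :
    (∃ y : ι → ℝ, (∀ i, 0 ≤ y i) ∧ ∑ i, w i * y i ≤ 1 ∧ x = z + r • y) ↔
      z ≤ x ∧ ∑ i, w i * (x i - z i) ≤ r := by
  constructor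
  · rintro ⟨y, hy0, hy1, rfl⟩
    refine ⟨fun i => by simpa using mul_nonneg hr.le (hy0 i), ?_⟩
    calc ∑ i, w i * ((z + r • y) i - z i) = r * ∑ i, w i * y i := by
          simp only [Pi.add_apply, Pi.smul_apply, smul_eq_mul, add_sub_cancel_left, mul_sum]
          exact sum_congr rfl fun i _ => by ring
      _ ≤ r := by simpa using mul_le_mul_of_nonneg_left hy1 hr.le
  · rintro ⟨hzx, hsum⟩
    refine ⟨r⁻¹ • (x - z), fun i => ?_, ?_, ?_⟩
    · simpa using mul_nonneg (inv_nonneg.2 hr.le) (sub_nonneg.2 (hzx i))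
    · calc ∑ i, w i * (r⁻¹ • (x - z)) i = r⁻¹ * ∑ i, w i * (x i - z i) := by
            simp only [Pi.smul_apply, Pi.sub_apply, smul_eq_mul, mul_sum]
            exact sum_congr rfl fun i _ => by ring
        _ ≤ r⁻¹ * r := by gcongr
        _ = 1 := inv_mul_cancel₀ hr.ne'
    · rw [smul_smul, mul_inv_cancel₀ hr.ne', one_smul, add_sub_cancel]

/-- The lattice points of `(z + r • S_w) ∩ Λ`, where `S_w = {y ≥ 0 | ∑ wᵢ yᵢ ≤ 1}` and
`Λ = {v | N ∣ ∑ wᵢ vᵢ}`. -/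
def coveredLatticePoints (w : ι → ℕ) (N : ℕ) (z : ι → ℤ) (r : ℝ) : Set (ι → ℤ) :=
  {v | (N : ℤ) ∣ ∑ i, (w i : ℤ) * v i ∧ ∃ y : ι → ℝ, (∀ i, 0 ≤ y i) ∧
    ∑ i, (w i : ℝ) * y i ≤ 1 ∧ (fun i => (v i : ℝ)) = (fun i => (z i : ℝ)) + r • y}

def IsIntegralSCovering (w : ι → ℕ) (N s : ℕ) (r : ℝ) : Prop :=
  ∀ z : ι → ℤ, ∃ v : Fin s → ι → ℤ, Function.Injective v ∧
    ∀ j, v j ∈ coveredLatticePoints w N z r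

variable {w : ι → ℕ} {N : ℕ} {z v : ι → ℤ} {r : ℝ}

theorem mem_coveredLatticePoints_iff (hr : 0 < r) :
    v ∈ coveredLatticePoints w N z r ↔
      (N : ℤ) ∣ ∑ i, (w i : ℤ) * v i ∧ z ≤ v ∧ ∑ i, (w i : ℤ) * (v i - z i) ≤ ⌊r⌋ := by
  change _ ∧ _ ↔ _
  rw [exists_nonneg_add_smul_eq_iff hr, Int.le_floor]
  push_cast
  simp only [Pi.le_def, Int.cast_le]

theorem coveredLatticePoints_eq_image (hr : 0 < r) :
    coveredLatticePoints w N z r =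
      (fun u : ι → ℕ => z + fun i => (u i : ℤ)) ''
        residuePoints w N (-∑ i, (w i : ℤ) * z i) ⌊r⌋ := by
  ext v
  rw [mem_coveredLatticePoints_iff hr]
  constructor
  · rintro ⟨hdvd, hzv, hle⟩
    have hu : ∀ i, ((v i - z i).toNat : ℤ) = v i - z i :=
      fun i => Int.toNat_of_nonneg (sub_nonneg.2 (hzv i))
    have hsub : ∑ i, (w i : ℤ) * (v i - z i) = ∑ i, (w i : ℤ) * v i - ∑ i, (w i : ℤ) * z i := by
      simp only [mul_sub, sum_sub_distrib]
    refine ⟨fun i => (v i - z i).toNat, ⟨?_, ?_⟩, funext fun i => by simp [hu]⟩ <;>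
      simp only [hu]
    · simpa [hsub] using (Int.modEq_zero_iff_dvd.2 hdvd).sub_right (∑ i, (w i : ℤ) * z i)
    · exact hle
  · rintro ⟨u, ⟨hmod, hle⟩, rfl⟩
    have hadd : ∑ i, (w i : ℤ) * (z + fun i => (u i : ℤ)) i =
        ∑ i, (w i : ℤ) * z i + ∑ i, (w i : ℤ) * u i := by
      simp only [Pi.add_apply, mul_add, sum_add_distrib]
    refine ⟨?_, fun i => by simp, by simpa using hle⟩
    rw [hadd]
    simpa [add_comm] using Int.modEq_iff_dvd.1 hmod.symm

theorem encard_coveredLatticePoints (hr : 0 < r) :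
    (coveredLatticePoints w N z r).encard =
      (residuePoints w N (-∑ i, (w i : ℤ) * z i) ⌊r⌋).encard := by
  rw [coveredLatticePoints_eq_image hr]
  refine Function.Injective.encard_image (fun u u' h => funext fun i => ?_) _
  simpa using congrFun h i

end

section

variable {m s : ℕ} {a : Fin (m + 1) → ℕ} {F : ℤ}

theorem le_encard_residuePoints (hF : IsGreatest {b | (representations a b).ncard < s} F)
    (hN : 0 < a (Fin.last m)) {t : ℤ} (ht : F + a (Fin.last m) ≤ t) (c : ℤ) :
    (s : ℕ∞) ≤ (residuePoints (Fin.init a) (a (Fin.last m)) c t).encard := by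
  have hN' : (0 : ℤ) < a (Fin.last m) := by exact_mod_cast hN
  set e := (c - F - 1) % a (Fin.last m)
  have he0 : 0 ≤ e := Int.emod_nonneg _ hN'.ne'
  have heN : e < a (Fin.last m) := Int.emod_lt_of_pos _ hN'
  have hb : F + 1 + e ≡ c [ZMOD a (Fin.last m)] := by
    simpa using (Int.mod_modEq (c - F - 1) _).add_left (F + 1)
  calc (s : ℕ∞) ≤ (representations a (F + 1 + e)).ncard :=
        Nat.cast_le.2 (not_lt.1 fun h => (hF.2 h).not_gt (by omega))
    _ ≤ (representations a (F + 1 + e)).encard := Set.ncard_le_encard _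
    _ = _ := encard_representations hN _
    _ ≤ _ := Set.encard_le_encard (residuePoints_subset hb (by omega))

theorem encard_residuePoints_lt (hF : IsGreatest {b | (representations a b).ncard < s} F)
    (ha : ∀ i, 0 < a i) :
    (residuePoints (Fin.init a) (a (Fin.last m)) F F).encard < s := by
  rw [← encard_representations (ha _), ← (finite_representations ha F).cast_ncard_eq]
  exact_mod_cast hF.1

theorem isIntegralSCovering_iff (ha : ∀ i, 0 < a i) (hgcd : univ.gcd a = 1)
    (hF : IsGreatest {b | (representations a b).ncard < s} F) {r : ℝ} (hr : 0 < r) :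
    IsIntegralSCovering (Fin.init a) (a (Fin.last m)) s r ↔ (F : ℝ) + a (Fin.last m) ≤ r := by
  have hfloor : (F : ℝ) + a (Fin.last m) ≤ r ↔ F + a (Fin.last m) ≤ ⌊r⌋ := by
    rw [Int.le_floor]
    push_cast
    rfl
  simp only [IsIntegralSCovering, Set.exists_injective_fin_iff_le_encard,
    encard_coveredLatticePoints hr, hfloor]
  refine ⟨fun hcover => ?_, fun ht z => le_encard_residuePoints hF (ha _) ht _⟩
  by_contra! hlt
  obtain ⟨z, hz⟩ := exists_sum_init_mul_modEq hgcd (-F)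
  have hsub := residuePoints_subset_self (w := Fin.init a) (by simpa using hz.neg) hlt
  exact (hcover z).not_gt ((Set.encard_le_encard hsub).trans_lt (encard_residuePoints_lt hF ha))

end

/-- **Integral s-covering radius and the s-Frobenius number**
(Lemma 2 in Aliev–Fukshansky–Henk, generalizing Kannan). Let `a` be a primitive
vector of positive integers, `F` its `s`-Frobenius number,
`S_a = {x ∈ ℝ^{n-1} : x ≥ 0, ∑ aᵢ xᵢ ≤ 1}` and
`Λ_a = {w ∈ ℤ^{n-1} : aₙ ∣ ∑ aᵢ wᵢ}`. If `ρ` is the least `ρ > 0` such that for every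
`z ∈ ℤ^{n-1}` the set `(z + ρ S_a) ∩ Λ_a` contains at least `s` points, then
`ρ = F + aₙ`. -/
theorem integral_sCoveringRadius_eq_sFrobenius_add {n s : ℕ} (hn : 2 ≤ n)
    (a : Fin n → ℕ) (ha : ∀ i, 0 < a i) (hgcd : Finset.univ.gcd a = 1)
    (F : ℤ)
    (hF : IsGreatest
      {b : ℤ | {z : Fin n → ℕ | ∑ i, (a i : ℤ) * (z i : ℤ) = b}.ncard < s} F)
    (ρ : ℝ)
    (hρ : IsLeast {r : ℝ | 0 < r ∧ ∀ z : Fin (n - 1) → ℤ,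
        ∃ v : Fin s → (Fin (n - 1) → ℤ), Function.Injective v ∧
          ∀ j, (a ⟨n - 1, by omega⟩ : ℤ) ∣
                 (∑ i, (a (Fin.castLE (n.sub_le 1) i) : ℤ) * v j i) ∧
            ∃ y : Fin (n - 1) → ℝ, (∀ i, 0 ≤ y i) ∧
              (∑ i, (a (Fin.castLE (n.sub_le 1) i) : ℝ) * y i) ≤ 1 ∧
              (fun i => (v j i : ℝ)) = (fun i => (z i : ℝ)) + r • y} ρ) :
    ρ = (F : ℝ) + (a ⟨n - 1, by omega⟩ : ℝ) := by
  obtain ⟨m, rfl⟩ : ∃ m, n = m + 1 := ⟨n - 1, by omega⟩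
  have hcover : {r : ℝ | 0 < r ∧ IsIntegralSCovering (Fin.init a) (a (Fin.last m)) s r} =
      {r | 0 < r ∧ (F : ℝ) + a (Fin.last m) ≤ r} :=
    Set.ext fun r => and_congr_right fun hr => isIntegralSCovering_iff ha hgcd hF hr
  exact eq_of_isLeast_setOf_lt_and_le (hcover ▸ hρ)
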